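/- Let a, c ∈ ℝ and b, d ∈ ℝ ∪ {+∞} with a < b and c < d. Then the k-vector space Hom(k_{[a,b)}, k_{[c,d)}) is one-dimensional over k if a ≤ c < b ≤ d, and is zero otherwise. -/

import Mathlib

open CategoryTheory TopologicalSpace Set Topology

noncomputable section

variable (k : Type) [Field k]

/-- The support of the function `s : V ∩ I → k` is closed in `V`. -/
def SuppClosedIn (I V : Set ℝ) (s : ↥(V ∩ I) → k) : Prop :=
  ∀ x ∈ V, x ∈ closure {y : ℝ | ∃ h : y ∈ V ∩ I, s ⟨y, h⟩ ≠ 0} →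
    ∃ h : x ∈ V ∩ I, s ⟨x, h⟩ ≠ 0

lemma zero_locConst (I V : Set ℝ) :
    IsLocallyConstant (0 : ↥(V ∩ I) → k) ∧ SuppClosedIn k I V 0 := by
  constructor
  · exact IsLocallyConstant.const 0
  · intro x _ hx
    exfalso
    have h0 : {y : ℝ | ∃ h : y ∈ V ∩ I, (0 : ↥(V ∩ I) → k) ⟨y, h⟩ ≠ 0} = ∅ := by
      ext y; simp
    rw [h0, closure_empty] at hx
    exact hx

/-- The sections over `V` of the sheaf `k_I`: locally constant functions on `V ∩ I`
whose support is closed in `V`. -/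
def secSub (I V : Set ℝ) : Submodule k (↥(V ∩ I) → k) where
  carrier := {s | IsLocallyConstant s ∧ SuppClosedIn k I V s}
  zero_mem' := zero_locConst k I V
  add_mem' := by
    rintro s t ⟨hslc, hscl⟩ ⟨htlc, htcl⟩
    have hlc : IsLocallyConstant (s + t) := hslc.comp₂ htlc (· + ·)
    refine ⟨hlc, ?_⟩
    intro x hxV hxcl
    have hsub : {y : ℝ | ∃ h : y ∈ V ∩ I, (s + t) ⟨y, h⟩ ≠ 0}
        ⊆ {y : ℝ | ∃ h : y ∈ V ∩ I, s ⟨y, h⟩ ≠ 0}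
          ∪ {y : ℝ | ∃ h : y ∈ V ∩ I, t ⟨y, h⟩ ≠ 0} := by
      rintro y ⟨h, hy⟩
      by_cases hsy : s ⟨y, h⟩ = 0
      · refine Or.inr ⟨h, fun h0 => hy ?_⟩
        show s ⟨y, h⟩ + t ⟨y, h⟩ = 0
        rw [hsy, h0, add_zero]
      · exact Or.inl ⟨h, hsy⟩
    have hxVI : x ∈ V ∩ I := by
      have hcl2 := closure_mono hsub hxcl
      rw [closure_union] at hcl2
      rcases hcl2 with h | h
      · exact (hscl x hxV h).choose
      · exact (htcl x hxV h).choose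
    refine ⟨hxVI, ?_⟩
    have hA : IsClosed {y : ↥(V ∩ I) | (s + t) y ≠ 0} := by
      have h1 : IsOpen ((s + t) ⁻¹' {0}) := hlc {0}
      have h2 := h1.isClosed_compl
      have h3 : ((s + t) ⁻¹' {0})ᶜ = {y : ↥(V ∩ I) | (s + t) y ≠ 0} := by
        ext y; simp
      exact h3 ▸ h2
    have hmem : (⟨x, hxVI⟩ : ↥(V ∩ I)) ∈ closure {y : ↥(V ∩ I) | (s + t) y ≠ 0} := by
      rw [closure_subtype]
      have himg : Subtype.val '' {y : ↥(V ∩ I) | (s + t) y ≠ 0}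
          = {y : ℝ | ∃ h : y ∈ V ∩ I, (s + t) ⟨y, h⟩ ≠ 0} := by
        ext y
        constructor
        · rintro ⟨z, hz, rfl⟩; exact ⟨z.2, hz⟩
        · rintro ⟨h, hy⟩; exact ⟨⟨y, h⟩, hy, rfl⟩
      rw [himg]
      exact hxcl
    have := hA.closure_eq ▸ hmem
    exact this
  smul_mem' := by
    intro c s hs
    rcases hs with ⟨hlc, hcl⟩
    by_cases hc : c = 0
    · subst hc
      rw [zero_smul]
      exact zero_locConst k I V
    · constructor
      · exact hlc.comp (fun a => c • a)
      · intro x hxV hxcl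
        have hset : {y : ℝ | ∃ h : y ∈ V ∩ I, (c • s) ⟨y, h⟩ ≠ 0}
            = {y : ℝ | ∃ h : y ∈ V ∩ I, s ⟨y, h⟩ ≠ 0} := by
          ext y
          constructor
          · rintro ⟨h, hy⟩
            refine ⟨h, fun h0 => hy ?_⟩
            show c • s ⟨y, h⟩ = 0
            rw [h0, smul_zero]
          · rintro ⟨h, hy⟩
            exact ⟨h, by simpa [smul_eq_zero, hc] using hy⟩
        rw [hset] at hxcl
        obtain ⟨h, hy⟩ := hcl x hxV hxcl
        exact ⟨h, by simpa [smul_eq_zero, hc] using hy⟩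
/-- Restriction of sections. -/
def resFun (I : Set ℝ) {V W : Set ℝ} (h : W ⊆ V) (s : ↥(V ∩ I) → k) : ↥(W ∩ I) → k :=
  fun y => s ⟨y.1, ⟨h y.2.1, y.2.2⟩⟩

lemma resFun_mem (I : Set ℝ) {V W : Set ℝ} (h : W ⊆ V) (s : ↥(V ∩ I) → k)
    (hs : s ∈ secSub k I V) : resFun k I h s ∈ secSub k I W := by
  obtain ⟨hlc, hcl⟩ := hs
  constructor
  · exact hlc.comp_continuous (Continuous.subtype_mk continuous_subtype_val _)
  · intro x hxW hxcl
    have hsub : {y : ℝ | ∃ h' : y ∈ W ∩ I, resFun k I h s ⟨y, h'⟩ ≠ 0}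
        ⊆ {y : ℝ | ∃ h' : y ∈ V ∩ I, s ⟨y, h'⟩ ≠ 0} := by
      rintro y ⟨h', hy⟩
      exact ⟨⟨h h'.1, h'.2⟩, hy⟩
    obtain ⟨hxVI, hne⟩ := hcl x (h hxW) (closure_mono hsub hxcl)
    exact ⟨⟨hxW, hxVI.2⟩, hne⟩

/-- Restriction as a linear map. -/
def resLM (I : Set ℝ) {V W : Set ℝ} (h : W ⊆ V) : secSub k I V →ₗ[k] secSub k I W where
  toFun s := ⟨resFun k I h s.1, resFun_mem k I h s.1 s.2⟩
  map_add' s t := rfl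
  map_smul' c s := rfl

/-- The presheaf `k_I` on `ℝ`. -/
def intervalPresheaf (I : Set ℝ) : TopCat.Presheaf (ModuleCat.{0} k) (TopCat.of ℝ) where
  obj V := ModuleCat.of k (secSub k I V.unop.1)
  map {V W} f := ModuleCat.ofHom (resLM k I (leOfHom f.unop))
  map_id V := rfl
  map_comp f g := rfl
theorem intervalPresheaf_isSheaf (I : Set ℝ) : (intervalPresheaf k I).IsSheaf := by
  classical
  rw [TopCat.Presheaf.isSheaf_iff_isSheafUniqueGluing]
  intro ι U sf hcomp
  let sf' : ∀ i, ↥(secSub k I (U i).1) := sf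
  -- pointwise compatibility
  have key : ∀ (i j : ι) (x : ℝ) (hxi : x ∈ (U i).1 ∩ I) (hxj : x ∈ (U j).1 ∩ I),
      (sf' i).1 ⟨x, hxi⟩ = (sf' j).1 ⟨x, hxj⟩ := by
    intro i j x hxi hxj
    have h := hcomp i j
    have hmem : x ∈ (U i ⊓ U j).1 ∩ I := ⟨⟨hxi.1, hxj.1⟩, hxi.2⟩
    have h2 := congrFun (congrArg Subtype.val h) ⟨x, hmem⟩
    exact h2
  have hmemS : ∀ x : ↥((iSup U : Opens (TopCat.of ℝ)).1 ∩ I), ∃ i, x.1 ∈ U i := by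
    intro x
    exact Opens.mem_iSup.mp x.2.1
  set idx : ↥((iSup U : Opens (TopCat.of ℝ)).1 ∩ I) → ι := fun x => (hmemS x).choose with hidxdef
  have hidx : ∀ x, x.1 ∈ U (idx x) := fun x => (hmemS x).choose_spec
  set s₀ : ↥((iSup U : Opens (TopCat.of ℝ)).1 ∩ I) → k :=
    fun x => (sf' (idx x)).1 ⟨x.1, ⟨hidx x, x.2.2⟩⟩ with hs₀def
  have hs₀ : ∀ (x : ↥((iSup U : Opens (TopCat.of ℝ)).1 ∩ I)) (i : ι) (hx : x.1 ∈ U i),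
      s₀ x = (sf' i).1 ⟨x.1, ⟨hx, x.2.2⟩⟩ :=
    fun x i hx => key (idx x) i x.1 ⟨hidx x, x.2.2⟩ ⟨hx, x.2.2⟩
  have hlc : IsLocallyConstant s₀ := by
    rw [IsLocallyConstant.iff_exists_open]
    intro x
    obtain ⟨i, hi⟩ := hmemS x
    have hlci : IsLocallyConstant ((sf' i).1 : ↥((U i).1 ∩ I) → k) := (sf' i).2.1
    obtain ⟨W, hWopen, hpW, hWconst⟩ := hlci.exists_open (⟨x.1, ⟨hi, x.2.2⟩⟩ : ↥((U i).1 ∩ I))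
    obtain ⟨O, hOopen, hWO⟩ := isOpen_induced_iff.mp hWopen
    subst hWO
    refine ⟨Subtype.val ⁻¹' (O ∩ (U i).1), (hOopen.inter (U i).2).preimage continuous_subtype_val,
      ⟨hpW, hi⟩, ?_⟩
    intro y hy
    have hyi : y.1 ∈ U i := hy.2
    rw [hs₀ y i hyi, hs₀ x i hi]
    exact hWconst ⟨y.1, ⟨hyi, y.2.2⟩⟩ hy.1
  have hscl : SuppClosedIn k I (iSup U : Opens (TopCat.of ℝ)).1 s₀ := by
    intro x hxS hxcl
    obtain ⟨i, hi⟩ := Opens.mem_iSup.mp hxS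
    have h1 : x ∈ closure ({y : ℝ | ∃ h : y ∈ (iSup U : Opens (TopCat.of ℝ)).1 ∩ I, s₀ ⟨y, h⟩ ≠ 0}
        ∩ (U i).1) := by
      rw [mem_closure_iff] at hxcl ⊢
      intro O hO hxO
      obtain ⟨z, hz⟩ := hxcl (O ∩ (U i).1) (hO.inter (U i).2) ⟨hxO, hi⟩
      exact ⟨z, hz.1.1, hz.2, hz.1.2⟩
    have hsub : {y : ℝ | ∃ h : y ∈ (iSup U : Opens (TopCat.of ℝ)).1 ∩ I, s₀ ⟨y, h⟩ ≠ 0}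
        ∩ (U i).1 ⊆ {y : ℝ | ∃ h : y ∈ (U i).1 ∩ I, (sf' i).1 ⟨y, h⟩ ≠ 0} := by
      rintro y ⟨⟨hy, hne⟩, hyi⟩
      refine ⟨⟨hyi, hy.2⟩, ?_⟩
      rw [← hs₀ ⟨y, hy⟩ i hyi]
      exact hne
    obtain ⟨hyUI, hne⟩ := (sf' i).2.2 x hi (closure_mono hsub h1)
    refine ⟨⟨hxS, hyUI.2⟩, ?_⟩
    rw [hs₀ ⟨x, ⟨hxS, hyUI.2⟩⟩ i hyUI.1]
    exact hne
  refine ⟨(⟨s₀, hlc, hscl⟩ : secSub k I _), ?_, ?_⟩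
  · intro i
    apply Subtype.ext
    funext y
    exact hs₀ ⟨y.1, ⟨leOfHom (Opens.leSupr U i) y.2.1, y.2.2⟩⟩ i y.2.1
  · intro t ht
    apply Subtype.ext
    funext x
    have h := ht (idx x)
    have h2 := congrFun (congrArg Subtype.val h) ⟨x.1, ⟨hidx x, x.2.2⟩⟩
    exact h2

/-- The sheaf `k_I` on `ℝ` for an interval `I`: locally constant functions on `V ∩ I`
whose support is closed in `V`. -/
def intervalSheaf (I : Set ℝ) :
    Sheaf (Opens.grothendieckTopology (TopCat.of ℝ)) (ModuleCat.{0} k) :=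
  ⟨intervalPresheaf k I, intervalPresheaf_isSheaf k I⟩
/-- The category of sheaves of `k`-vector spaces on `ℝ`. -/
abbrev RealSheafCat := Sheaf (Opens.grothendieckTopology (TopCat.of ℝ)) (ModuleCat.{0} k)

instance sheafHomSMul (F G : RealSheafCat k) : SMul k (F ⟶ G) :=
  ⟨fun c f => ⟨c • f.hom⟩⟩

instance sheafHomModule (F G : RealSheafCat k) : Module k (F ⟶ G) :=
  Function.Injective.module k
    { toFun := fun f : F ⟶ G => f.hom
      map_zero' := rfl
      map_add' := fun _ _ => rfl }
    (fun _ _ h => Sheaf.hom_ext h) (fun _ _ => rfl)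

instance : HasExt.{1} (RealSheafCat k) := by
  letI := HasDerivedCategory.standard (RealSheafCat k)
  exact hasExt_of_hasDerivedCategory _

/-- The interval `(a, b)` with possibly infinite endpoints. -/
def Ioo' (a b : EReal) : Set ℝ := {x : ℝ | a < (x : EReal) ∧ (x : EReal) < b}

/-- The interval `[a, b)` with a possibly infinite right endpoint. -/
def Ico' (a : ℝ) (b : EReal) : Set ℝ := {x : ℝ | a ≤ x ∧ (x : EReal) < b}

/-- The interval `(a, b]` with a possibly infinite left endpoint. -/
def Ioc' (a : EReal) (b : ℝ) : Set ℝ := {x : ℝ | a < (x : EReal) ∧ x ≤ b}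

/-- Identification of sheaves on the topological space `ℝ` with objects of `RealSheafCat`. -/
def toRS (F : TopCat.Sheaf (ModuleCat.{0} k) (TopCat.of ℝ)) : RealSheafCat k := F


/-!
A morphism `f : k_{[a,b)} ⟶ k_{[c,d)}` is determined by its generator, the image of the constant
section `1` over `(-∞, b)`: near a point of `[a, b)` every section of `k_{[a,b)}` is a multiple
of `1`, and near any other point it vanishes. The generator is a section of `k_{[c,d)}` over the
connected set `(-∞, b) ∩ [c, d)`, hence constant, so evaluation at `c` embeds `Hom` into `k`.
If `a ≤ c < b ≤ d`, extending by zero the restriction to `[c, b)` gives a morphism with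
generator `1`; otherwise the constant is forced to vanish.
-/

open Opposite

variable {k}

lemma SuppClosedIn.exists_isOpen_eq_zero {I V : Set ℝ} {s : ↥(V ∩ I) → k}
    (hs : SuppClosedIn k I V s) (hV : IsOpen V) {x : ℝ} (hxV : x ∈ V) (hxI : x ∉ I) :
    ∃ W : Set ℝ, IsOpen W ∧ x ∈ W ∧ W ⊆ V ∧ ∀ y (hy : y ∈ V ∩ I), y ∈ W → s ⟨y, hy⟩ = 0 := by
  set S := {y : ℝ | ∃ h : y ∈ V ∩ I, s ⟨y, h⟩ ≠ 0}
  have hxS : x ∉ closure S := fun hx => hxI (hs x hxV hx).1.2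
  refine ⟨V \ closure S, hV.sdiff isClosed_closure, ⟨hxV, hxS⟩, sdiff_subset, fun y hy hyW => ?_⟩
  by_contra hne
  exact hyW.2 (subset_closure ⟨hy, hne⟩)

lemma SuppClosedIn.eq_zero_of_forall_eq {I V : Set ℝ} {s : ↥(V ∩ I) → k}
    (hs : SuppClosedIn k I V s) (hconst : ∀ y z, s y = s z) {x : ℝ} (hxV : x ∈ V) (hxI : x ∉ I)
    (hx : x ∈ closure (V ∩ I)) (y : ↥(V ∩ I)) : s y = 0 := by
  by_contra hy
  have hS : {z : ℝ | ∃ h : z ∈ V ∩ I, s ⟨z, h⟩ ≠ 0} = V ∩ I :=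
    Set.ext fun z => ⟨fun ⟨h, _⟩ => h, fun h => ⟨h, hconst ⟨z, h⟩ y ▸ hy⟩⟩
  exact hxI (hs x hxV (by rwa [hS])).1.2

def Iio' (b : EReal) : Opens (TopCat.of ℝ) :=
  ⟨{x | (x : EReal) < b}, isOpen_Iio.preimage continuous_coe_real_ereal⟩

lemma ordConnected_Iio'_inter_Ico' (b : EReal) (c : ℝ) (d : EReal) :
    ((Iio' b).1 ∩ Ico' c d).OrdConnected :=
  have hmono : Monotone ((↑) : ℝ → EReal) := EReal.coe_strictMono.monotone
  (ordConnected_Iio.preimage_mono hmono).inter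
    (ordConnected_Ici.inter (ordConnected_Iio.preimage_mono hmono))

namespace intervalSheaf

variable (k) in
def oneSection (a : ℝ) (b : EReal) : secSub k (Ico' a b) (Iio' b).1 :=
  ⟨fun _ => 1, IsLocallyConstant.const 1, fun _ hxV hx =>
    ⟨⟨hxV, isClosed_Ici.closure_subset_iff.2 (fun _ hy => hy.1.2.1) hx, hxV⟩, one_ne_zero⟩⟩

def generator {a : ℝ} {b : EReal} {J : Set ℝ}
    (f : intervalSheaf k (Ico' a b) ⟶ intervalSheaf k J) : secSub k J (Iio' b).1 :=
  f.hom.app (op (Iio' b)) (oneSection k a b)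

section Naturality

variable {I J : Set ℝ} (f : intervalSheaf k I ⟶ intervalSheaf k J)

lemma hom_app_map_apply {V W : Opens (TopCat.of ℝ)} (h : W ≤ V) (s : secSub k I V.1)
    (x : ℝ) (hx : x ∈ W.1 ∩ J) :
    (f.hom.app (op W) ((intervalSheaf k I).obj.map (homOfLE h).op s)).1 ⟨x, hx⟩
      = (f.hom.app (op V) s).1 ⟨x, h hx.1, hx.2⟩ :=
  congrArg (fun g => (g s).1 ⟨x, hx⟩) (f.hom.naturality (homOfLE h).op)

lemma hom_app_apply_of_notMem {V : Opens (TopCat.of ℝ)} (s : secSub k I V.1) {x : ℝ}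
    (hx : x ∈ V.1 ∩ J) (hxI : x ∉ I) : (f.hom.app (op V) s).1 ⟨x, hx⟩ = 0 := by
  obtain ⟨W, hWo, hxW, hWV, hs⟩ := s.2.2.exists_isOpen_eq_zero V.2 hx.1 hxI
  have hle : (⟨W, hWo⟩ : Opens (TopCat.of ℝ)) ≤ V := hWV
  have hres : (intervalSheaf k I).obj.map (homOfLE hle).op s = 0 :=
    Subtype.ext <| funext fun y => hs y.1 _ y.2.1
  rw [← hom_app_map_apply f hle s x ⟨hxW, hx.2⟩, hres, map_zero]
  rfl

end Naturality

section Generator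

variable {a : ℝ} {b : EReal} {J : Set ℝ} (f : intervalSheaf k (Ico' a b) ⟶ intervalSheaf k J)

lemma hom_app_apply_of_mem {V : Opens (TopCat.of ℝ)} (s : secSub k (Ico' a b) V.1) {x : ℝ}
    (hx : x ∈ V.1 ∩ J) (hxI : x ∈ Ico' a b) :
    (f.hom.app (op V) s).1 ⟨x, hx⟩ = s.1 ⟨x, hx.1, hxI⟩ * (generator f).1 ⟨x, hxI.2, hx.2⟩ := by
  obtain ⟨U, hUo, hxU, hsU⟩ := s.2.1.exists_open ⟨x, hx.1, hxI⟩
  obtain ⟨O, hOo, rfl⟩ := isOpen_induced_iff.mp hUo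
  let W : Opens (TopCat.of ℝ) := ⟨O ∩ V.1 ∩ (Iio' b).1, (hOo.inter V.2).inter (Iio' b).2⟩
  have hWV : W ≤ V := fun y hy => hy.1.2
  have hWb : W ≤ Iio' b := fun y hy => hy.2
  have hres : (intervalSheaf k (Ico' a b)).obj.map (homOfLE hWV).op s
      = s.1 ⟨x, hx.1, hxI⟩ • (intervalSheaf k (Ico' a b)).obj.map (homOfLE hWb).op
          (oneSection k a b) :=
    Subtype.ext <| funext fun y => (hsU ⟨y.1, hWV y.2.1, y.2.2⟩ y.2.1.1.1).trans (mul_one _).symm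
  have hxW : x ∈ W.1 ∩ J := ⟨⟨⟨hxU, hx.1⟩, hxI.2⟩, hx.2⟩
  rw [← hom_app_map_apply f hWV s x hxW, hres, map_smul]
  exact congrArg (s.1 ⟨x, hx.1, hxI⟩ * ·) (hom_app_map_apply f hWb _ x hxW)

lemma eq_zero_of_generator_eq_zero (h : generator f = 0) : f = 0 := by
  refine Sheaf.hom_ext (NatTrans.ext (funext fun V => ModuleCat.hom_ext (LinearMap.ext
    fun s => Subtype.ext (funext fun y => ?_))))
  by_cases hy : y.1 ∈ Ico' a b
  · rw [hom_app_apply_of_mem f s y.2 hy, h]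
    exact mul_zero _
  · exact hom_app_apply_of_notMem f s y.2 hy

variable {c : ℝ} {d : EReal}

lemma generator_apply_eq (f : intervalSheaf k (Ico' a b) ⟶ intervalSheaf k (Ico' c d))
    (y z : ↥((Iio' b).1 ∩ Ico' c d)) : (generator f).1 y = (generator f).1 z :=
  haveI := Subtype.preconnectedSpace (ordConnected_Iio'_inter_Ico' b c d).isPreconnected
  (generator f).2.1.apply_eq_of_preconnectedSpace y z

/-- Off the configuration `a ≤ c < b ≤ d` the generator vanishes: for `c < a` it vanishes at `c`,
which lies outside `[a, b)`; for `d < b` a nonzero constant would have the point `d ∉ [c, d)` in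
the closure of its support. -/
lemma generator_eq_zero (hcd : (c : EReal) < d) (h : ¬ (a ≤ c ∧ (c : EReal) < b ∧ b ≤ d))
    (f : intervalSheaf k (Ico' a b) ⟶ intervalSheaf k (Ico' c d)) : generator f = 0 := by
  refine Subtype.ext (funext fun y => ?_)
  have hcb : (c : EReal) < b := (EReal.coe_le_coe_iff.2 y.2.2.1).trans_lt y.2.1
  by_cases hac : a ≤ c
  · have hdb : d < b := lt_of_not_ge fun hbd => h ⟨hac, hcb, hbd⟩
    obtain ⟨d, rfl⟩ : ∃ r : ℝ, (r : EReal) = d :=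
      ⟨d.toReal, EReal.coe_toReal (ne_top_of_lt hdb) (ne_bot_of_gt hcd)⟩
    have hd : d ∈ closure ((Iio' b).1 ∩ Ico' c d) := by
      refine closure_mono (fun z hz => ?_) (by
        rw [closure_Ico (EReal.coe_lt_coe_iff.1 hcd).ne]
        exact right_mem_Icc.2 (EReal.coe_lt_coe_iff.1 hcd).le)
      have hzd : (z : EReal) < d := EReal.coe_lt_coe_iff.2 hz.2
      exact ⟨hzd.trans hdb, hz.1, hzd⟩
    exact (generator f).2.2.eq_zero_of_forall_eq (generator_apply_eq f) hdb
      (fun hd' => lt_irrefl _ hd'.2) hd y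
  · exact (generator_apply_eq f y ⟨c, hcb, le_rfl, hcd⟩).trans
      (hom_app_apply_of_notMem f (oneSection k a b) _ fun hc => hac hc.1)

end Generator

section Canonical

variable {a c : ℝ} {b d : EReal}

def extendFun (hac : a ≤ c) (V : Set ℝ) (s : ↥(V ∩ Ico' a b) → k) : ↥(V ∩ Ico' c d) → k :=
  fun y => if h : (y.1 : EReal) < b then s ⟨y.1, y.2.1, hac.trans y.2.2.1, h⟩ else 0

lemma isLocallyConstant_extendFun (hac : a ≤ c) {V : Set ℝ} (hV : IsOpen V)
    (s : secSub k (Ico' a b) V) : IsLocallyConstant (extendFun (d := d) hac V s.1) := by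
  rw [IsLocallyConstant.iff_exists_open]
  intro y
  by_cases hyb : (y.1 : EReal) < b
  · obtain ⟨U, hUo, hyU, hsU⟩ := s.2.1.exists_open ⟨y.1, y.2.1, hac.trans y.2.2.1, hyb⟩
    obtain ⟨O, hOo, rfl⟩ := isOpen_induced_iff.mp hUo
    refine ⟨Subtype.val ⁻¹' (O ∩ (Iio' b).1),
      (hOo.inter (Iio' b).2).preimage continuous_subtype_val, ⟨hyU, hyb⟩, fun z hz => ?_⟩
    simp only [extendFun, dif_pos hyb, dif_pos (show (z.1 : EReal) < b from hz.2)]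
    exact hsU _ hz.1
  · obtain ⟨W, hWo, hyW, -, hsW⟩ :=
      s.2.2.exists_isOpen_eq_zero hV y.2.1 fun hy => hyb hy.2
    refine ⟨Subtype.val ⁻¹' W, hWo.preimage continuous_subtype_val, hyW, fun z hz => ?_⟩
    simp only [extendFun, dif_neg hyb]
    split_ifs with hzb
    · exact hsW _ _ hz
    · rfl

lemma suppClosedIn_extendFun (hac : a ≤ c) (hbd : b ≤ d) {V : Set ℝ}
    (s : secSub k (Ico' a b) V) : SuppClosedIn k (Ico' c d) V (extendFun hac V s.1) := by
  intro x hxV hx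
  have hsupp : {y : ℝ | ∃ h : y ∈ V ∩ Ico' c d, extendFun hac V s.1 ⟨y, h⟩ ≠ 0}
      ⊆ {y : ℝ | ∃ h : y ∈ V ∩ Ico' a b, s.1 ⟨y, h⟩ ≠ 0} ∩ Ici c := by
    rintro y ⟨hy, hne⟩
    simp only [extendFun] at hne
    split_ifs at hne with hyb
    · exact ⟨⟨_, hne⟩, hy.2.1⟩
    · exact absurd rfl hne
  have hx' := closure_mono hsupp hx
  obtain ⟨hxab, hsx⟩ := s.2.2 x hxV (closure_mono inter_subset_left hx')
  have hcx : c ≤ x := isClosed_Ici.closure_subset (closure_mono inter_subset_right hx')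
  refine ⟨⟨hxV, hcx, hxab.2.2.trans_le hbd⟩, ?_⟩
  simpa only [extendFun, dif_pos hxab.2.2] using hsx

def extendLinearMap (hac : a ≤ c) (hbd : b ≤ d) (V : Opens (TopCat.of ℝ)) :
    secSub k (Ico' a b) V.1 →ₗ[k] secSub k (Ico' c d) V.1 where
  toFun s := ⟨extendFun hac V.1 s.1, isLocallyConstant_extendFun hac V.2 s,
    suppClosedIn_extendFun hac hbd s⟩
  map_add' s t := Subtype.ext <| funext fun y => by
    show extendFun hac V.1 (s.1 + t.1) y = extendFun hac V.1 s.1 y + extendFun hac V.1 t.1 y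
    by_cases hyb : (y.1 : EReal) < b <;> simp [extendFun, hyb]
  map_smul' r s := Subtype.ext <| funext fun y => by
    show extendFun hac V.1 (r • s.1) y = r • extendFun hac V.1 s.1 y
    by_cases hyb : (y.1 : EReal) < b <;> simp [extendFun, hyb]

def canonicalHom (hac : a ≤ c) (hbd : b ≤ d) :
    intervalSheaf k (Ico' a b) ⟶ intervalSheaf k (Ico' c d) :=
  ⟨{ app := fun V => ModuleCat.ofHom (extendLinearMap hac hbd V.unop)
     naturality := fun _ _ _ => rfl }⟩

lemma generator_canonicalHom_apply (hac : a ≤ c) (hbd : b ≤ d) (hcb : (c : EReal) < b)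
    (hcd : (c : EReal) < d) :
    (generator (canonicalHom (k := k) hac hbd)).1 ⟨c, hcb, le_rfl, hcd⟩ = 1 :=
  dif_pos hcb

theorem rank_hom_eq_one (hac : a ≤ c) (hcb : (c : EReal) < b) (hbd : b ≤ d)
    (hcd : (c : EReal) < d) :
    Module.rank k (intervalSheaf k (Ico' a b) ⟶ intervalSheaf k (Ico' c d)) = 1 := by
  let evalGenerator : (intervalSheaf k (Ico' a b) ⟶ intervalSheaf k (Ico' c d)) →ₗ[k] k :=
    { toFun := fun f => (generator f).1 ⟨c, hcb, le_rfl, hcd⟩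
      map_add' := fun _ _ => rfl
      map_smul' := fun _ _ => rfl }
  have hinj : Function.Injective evalGenerator :=
    (injective_iff_map_eq_zero _).2 fun f hf => eq_zero_of_generator_eq_zero f <|
      Subtype.ext <| funext fun y => (generator_apply_eq f y _).trans hf
  have hsurj : Function.Surjective evalGenerator := fun r =>
    ⟨r • canonicalHom hac hbd, by
      rw [map_smul, smul_eq_mul]
      exact (congrArg (r * ·) (generator_canonicalHom_apply hac hbd hcb hcd)).trans (mul_one r)⟩
  rw [(LinearEquiv.ofBijective evalGenerator ⟨hinj, hsurj⟩).rank_eq, Module.rank_self]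

end Canonical

end intervalSheaf

theorem hom_ico_ico_general (k : Type) [Field k] (a : ℝ) (b : EReal)
    (c : ℝ) (d : EReal) (hcd : (c : EReal) < d) :
    ((a ≤ c ∧ (c : EReal) < b ∧ b ≤ d) →
      Module.rank k (intervalSheaf k (Ico' a b) ⟶ intervalSheaf k (Ico' c d)) = 1) ∧
    (¬ (a ≤ c ∧ (c : EReal) < b ∧ b ≤ d) →
      ∀ f : intervalSheaf k (Ico' a b) ⟶ intervalSheaf k (Ico' c d), f = 0) :=
  ⟨fun ⟨hac, hcb, hbd⟩ => intervalSheaf.rank_hom_eq_one hac hcb hbd hcd,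
    fun h f =>
      intervalSheaf.eq_zero_of_generator_eq_zero f (intervalSheaf.generator_eq_zero hcd h f)⟩

/-- For `a, c ∈ ℝ` and `b, d ∈ ℝ ∪ {+∞}` with `a < b` and `c < d`,
the space `Hom(k_{[a,b)}, k_{[c,d)})` is one-dimensional over `k` if `a ≤ c < b ≤ d`,
and is zero otherwise. -/
theorem hom_ico_ico (k : Type) [Field k] (a : ℝ) (b : EReal) (hab : (a : EReal) < b)
    (c : ℝ) (d : EReal) (hcd : (c : EReal) < d) :
    ((a ≤ c ∧ (c : EReal) < b ∧ b ≤ d) →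
      Module.rank k (intervalSheaf k (Ico' a b) ⟶ intervalSheaf k (Ico' c d)) = 1) ∧
    (¬ (a ≤ c ∧ (c : EReal) < b ∧ b ≤ d) →
      ∀ f : intervalSheaf k (Ico' a b) ⟶ intervalSheaf k (Ico' c d), f = 0) :=
  hom_ico_ico_general k a b c d hcd

end
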